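/- Given a sequential vset-automaton A with n states and m transitions and a set X ⊆ Vars(A), there exists a sequential vset-automaton A′ that is equivalent to A (i.e., ⟦A′⟧(d) = ⟦A⟧(d) for every document d), is semi-functional for X, and has at most 2^{|X|}·n states and at most 2^{|X|}·m transitions. -/

import Mathlib

namespace Spanners

open scoped Classical

/-! ### Spans and mappings -/

abbrev Span := ℕ × ℕ

abbrev VMapping := ℕ → Option Span

def emptyMapping : VMapping := fun _ => none

def mapDom (μ : VMapping) : Set ℕ := {x | μ x ≠ none}

/-- Two mappings are compatible if they agree on every common variable. -/
def Compatible (μ1 μ2 : VMapping) : Prop :=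
  ∀ x s1 s2, μ1 x = some s1 → μ2 x = some s2 → s1 = s2

def DisjointDom (μ1 μ2 : VMapping) : Prop :=
  ∀ x, μ1 x = none ∨ μ2 x = none

def munion (μ1 μ2 : VMapping) : VMapping := fun x =>
  match μ1 x with
  | some s => some s
  | none => μ2 x

def minsert (x : ℕ) (s : Span) (μ : VMapping) : VMapping :=
  fun y => if y = x then some s else μ y

/-- Natural join of two sets of mappings. -/
def joinSet (S1 S2 : Set VMapping) : Set VMapping :=
  {μ | ∃ μ1 ∈ S1, ∃ μ2 ∈ S2, Compatible μ1 μ2 ∧ μ = munion μ1 μ2}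

/-- Difference of two sets of mappings. -/
def diffSet (S1 S2 : Set VMapping) : Set VMapping :=
  {μ1 | μ1 ∈ S1 ∧ ∀ μ2 ∈ S2, ¬ Compatible μ1 μ2}

/-- Restriction of a mapping to a set of variables. -/
noncomputable def restrictMap (μ : VMapping) (V : Set ℕ) : VMapping :=
  fun x => if x ∈ V then μ x else none

/-- Projection of a set of mappings to a set of variables. -/
def projSet (V : Set ℕ) (S : Set VMapping) : Set VMapping :=
  {μ' | ∃ μ ∈ S, μ' = restrictMap μ V}

/-! ### Regex formulas -/

inductive RGX (Sig : Type) where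
  | empty : RGX Sig
  | eps : RGX Sig
  | letter : Sig → RGX Sig
  | union : RGX Sig → RGX Sig → RGX Sig
  | concat : RGX Sig → RGX Sig → RGX Sig
  | star : RGX Sig → RGX Sig
  | bind : ℕ → RGX Sig → RGX Sig

variable {Sig : Type}

def RGX.vars : RGX Sig → Finset ℕ
  | .empty => ∅
  | .eps => ∅
  | .letter _ => ∅
  | .union a b => a.vars ∪ b.vars
  | .concat a b => a.vars ∪ b.vars
  | .star a => a.vars
  | .bind x a => insert x a.vars

def RGX.size : RGX Sig → ℕ
  | .empty => 1
  | .eps => 1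
  | .letter _ => 1
  | .union a b => a.size + b.size + 1
  | .concat a b => a.size + b.size + 1
  | .star a => a.size + 1
  | .bind _ a => a.size + 1

/-- The schemaless semantics `⟨α⟩(d)`: `RMatch α d i j μ` means `([i,j⟩, μ) ∈ ⟨α⟩(d)`. -/
inductive RMatch : RGX Sig → List Sig → ℕ → ℕ → VMapping → Prop where
  | eps {d : List Sig} {i : ℕ} (h1 : 1 ≤ i) (h2 : i ≤ d.length + 1) :
      RMatch .eps d i i emptyMapping
  | letter {d : List Sig} {i : ℕ} {σ : Sig} (h1 : 1 ≤ i) (h2 : d[i - 1]? = some σ) :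
      RMatch (.letter σ) d i (i + 1) emptyMapping
  | unionL {a b : RGX Sig} {d : List Sig} {i j : ℕ} {μ : VMapping}
      (h : RMatch a d i j μ) : RMatch (.union a b) d i j μ
  | unionR {a b : RGX Sig} {d : List Sig} {i j : ℕ} {μ : VMapping}
      (h : RMatch b d i j μ) : RMatch (.union a b) d i j μ
  | concat {a b : RGX Sig} {d : List Sig} {i k j : ℕ} {μ1 μ2 : VMapping}
      (h1 : RMatch a d i k μ1) (h2 : RMatch b d k j μ2) (hd : DisjointDom μ1 μ2) :
      RMatch (.concat a b) d i j (munion μ1 μ2)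
  | bind {x : ℕ} {a : RGX Sig} {d : List Sig} {i j : ℕ} {μ : VMapping}
      (h : RMatch a d i j μ) (hx : μ x = none) :
      RMatch (.bind x a) d i j (minsert x (i, j) μ)
  | starNil {a : RGX Sig} {d : List Sig} {i : ℕ} (h1 : 1 ≤ i) (h2 : i ≤ d.length + 1) :
      RMatch (.star a) d i i emptyMapping
  | starCons {a : RGX Sig} {d : List Sig} {i k j : ℕ} {μ1 μ2 : VMapping}
      (h1 : RMatch a d i k μ1) (h2 : RMatch (.star a) d k j μ2) (hd : DisjointDom μ1 μ2) :
      RMatch (.star a) d i j (munion μ1 μ2)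

/-- `⟦α⟧(d)`: mappings extracted with the full span. -/
def rgxSem (α : RGX Sig) (d : List Sig) : Set VMapping :=
  {μ | RMatch α d 1 (d.length + 1) μ}

/-- Sequential regex formulas. -/
def RGX.Sequential : RGX Sig → Prop
  | .empty => True
  | .eps => True
  | .letter _ => True
  | .union a b => a.Sequential ∧ b.Sequential
  | .concat a b => a.Sequential ∧ b.Sequential ∧ Disjoint a.vars b.vars
  | .star a => a.Sequential ∧ a.vars = ∅
  | .bind x a => a.Sequential ∧ x ∉ a.vars

/-- Variable-free words over the alphabet (built from ε, letters and concatenation). -/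
inductive RGX.IsWord : RGX Sig → Prop where
  | eps : RGX.IsWord .eps
  | letter (σ : Sig) : RGX.IsWord (.letter σ)
  | concat {a b : RGX Sig} : a.IsWord → b.IsWord → RGX.IsWord (.concat a b)

/-- Functional for a set `V` of variables. -/
inductive FunctionalFor : RGX Sig → Finset ℕ → Prop where
  | word {α : RGX Sig} (h : α.IsWord) : FunctionalFor α ∅
  | union {a b : RGX Sig} {V : Finset ℕ} (ha : FunctionalFor a V) (hb : FunctionalFor b V) :
      FunctionalFor (.union a b) V
  | concat {a b : RGX Sig} {V : Finset ℕ} (V1 : Finset ℕ) (hsub : V1 ⊆ V)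
      (ha : FunctionalFor a V1) (hb : FunctionalFor b (V \ V1)) :
      FunctionalFor (.concat a b) V
  | star {a : RGX Sig} (h : FunctionalFor a ∅) : FunctionalFor (.star a) ∅
  | bind {x : ℕ} {a : RGX Sig} {V : Finset ℕ} (h : FunctionalFor a (V.erase x)) :
      FunctionalFor (.bind x a) V

def RGX.Functional (α : RGX Sig) : Prop := FunctionalFor α α.vars

/-- Disjunctive functional regex formulas: finite disjunctions of functional regex formulas. -/
inductive DisjFunctional : RGX Sig → Prop where
  | base {γ : RGX Sig} (h : γ.Functional) : DisjFunctional γ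
  | union {a b : RGX Sig} (ha : DisjFunctional a) (hb : DisjFunctional b) :
      DisjFunctional (.union a b)

/-- Number of disjuncts of a (disjunctive) regex formula. -/
def countDisjuncts : RGX Sig → ℕ
  | .union a b => countDisjuncts a + countDisjuncts b
  | _ => 1

/-- Disjunction-free regex formulas. -/
def RGX.DisjFree : RGX Sig → Prop
  | .union _ _ => False
  | .concat a b => a.DisjFree ∧ b.DisjFree
  | .star a => a.DisjFree
  | .bind _ a => a.DisjFree
  | _ => True

/-- `γ` is synchronized for `x`: no subformula `γ1 ∨ γ2` contains `x`. -/
def RGX.SyncFor : RGX Sig → ℕ → Prop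
  | .union a b, x => (x ∉ a.vars ∧ x ∉ b.vars) ∧ a.SyncFor x ∧ b.SyncFor x
  | .concat a b, x => a.SyncFor x ∧ b.SyncFor x
  | .star a, x => a.SyncFor x
  | .bind _ a, x => a.SyncFor x
  | _, _ => True

/-- Concatenation of a list of regex formulas. -/
def concatList : List (RGX Sig) → RGX Sig
  | [] => .eps
  | [α] => α
  | α :: rest => .concat α (concatList rest)

/-- Disjunction of a list of regex formulas. -/
def disjList : List (RGX Sig) → RGX Sig
  | [] => .empty
  | [α] => α
  | α :: rest => .union α (disjList rest)

/-! ### vset-automata -/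

inductive VLabel (Sig : Type) where
  | eps : VLabel Sig
  | letter : Sig → VLabel Sig
  | openv : ℕ → VLabel Sig
  | closev : ℕ → VLabel Sig
deriving DecidableEq

structure VA (Sig : Type) [DecidableEq Sig] where
  q0 : ℕ
  F : Finset ℕ
  δ : Finset (ℕ × VLabel Sig × ℕ)

variable [DecidableEq Sig]

/-- The states of a VA: the initial state and all states mentioned in `F` or in transitions. -/
def statesOf (A : VA Sig) : Finset ℕ :=
  insert A.q0 (A.F ∪ A.δ.image (fun t => t.1) ∪ A.δ.image (fun t => t.2.2))

def labelVars : VLabel Sig → Finset ℕ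
  | .openv x => {x}
  | .closev x => {x}
  | _ => ∅

/-- `Vars(A)`: the variables mentioned in the transitions of `A`. -/
def varsOf (A : VA Sig) : Finset ℕ := A.δ.biUnion (fun t => labelVars t.2.1)

/-- Total size of a VA: number of states plus number of transitions. -/
def vaSize (A : VA Sig) : ℕ := (statesOf A).card + A.δ.card

/-- `A.PathFrom p ls q`: a path (run segment) from `p` to `q` with label sequence `ls`. -/
inductive VA.PathFrom (A : VA Sig) : ℕ → List (VLabel Sig) → ℕ → Prop where
  | nil (q : ℕ) : VA.PathFrom A q [] q
  | cons {p q r : ℕ} {l : VLabel Sig} {ls : List (VLabel Sig)}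
      (h : (p, l, q) ∈ A.δ) (htail : VA.PathFrom A q ls r) : VA.PathFrom A p (l :: ls) r

/-- The word (document) read by a sequence of labels. -/
def readWord : List (VLabel Sig) → List Sig :=
  List.filterMap fun l => match l with
    | VLabel.letter σ => some σ
    | _ => none

def isLetterL : VLabel Sig → Bool
  | .letter _ => true
  | _ => false

/-- The current position in the document just before executing the `k`-th label. -/
def posAt (ls : List (VLabel Sig)) (k : ℕ) : ℕ := 1 + (ls.take k).countP isLetterL

/-- Validity of a run, given by its label sequence. -/
def ValidLabels (ls : List (VLabel Sig)) : Prop :=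
  ∀ x : ℕ,
    ls.count (VLabel.openv x) ≤ 1 ∧
    ls.count (VLabel.closev x) ≤ 1 ∧
    ((VLabel.openv x) ∈ ls ↔ (VLabel.closev x) ∈ ls) ∧
    ∀ i j : ℕ, ls[i]? = some (VLabel.openv x) → ls[j]? = some (VLabel.closev x) →
      posAt ls i ≤ posAt ls j

/-- The mapping `μ_ρ` extracted from a (valid accepting) run with label sequence `ls`. -/
def runMapping (ls : List (VLabel Sig)) : VMapping := fun x =>
  if (VLabel.openv x) ∈ ls then
    some (posAt ls (ls.idxOf (VLabel.openv x)), posAt ls (ls.idxOf (VLabel.closev x)))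
  else none

/-- `ls` is the label sequence of an accepting run of `A`. -/
def AcceptsWith (A : VA Sig) (ls : List (VLabel Sig)) : Prop :=
  ∃ qf, VA.PathFrom A A.q0 ls qf ∧ qf ∈ A.F

/-- `⟦A⟧(d)`. -/
def vaSem (A : VA Sig) (d : List Sig) : Set VMapping :=
  {μ | ∃ ls, AcceptsWith A ls ∧ readWord ls = d ∧ ValidLabels ls ∧ μ = runMapping ls}

/-- A VA is sequential if all of its accepting runs are valid. -/
def VA.Sequential (A : VA Sig) : Prop := ∀ ls, AcceptsWith A ls → ValidLabels ls

/-- A run from the initial state to `q` that is a prefix of an accepting run. -/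
def PrefixRun (A : VA Sig) (ls : List (VLabel Sig)) (q : ℕ) : Prop :=
  VA.PathFrom A A.q0 ls q ∧ ∃ ls' qf, VA.PathFrom A q ls' qf ∧ qf ∈ A.F

/-- `A` is semi-functional for the variable `x`: no state has extended configuration `d`. -/
def SemiFunctionalFor (A : VA Sig) (x : ℕ) : Prop :=
  ¬ ∃ q ls1 ls2, PrefixRun A ls1 q ∧ PrefixRun A ls2 q ∧
      (VLabel.closev x) ∈ ls1 ∧ (VLabel.openv x) ∉ ls2

def SemiFunctionalForSet (A : VA Sig) (X : Finset ℕ) : Prop :=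
  ∀ x ∈ X, SemiFunctionalFor A x

/-- Functional VA: sequential, and every accepting run opens and closes every variable. -/
def FunctionalVA (A : VA Sig) : Prop :=
  A.Sequential ∧ ∀ ls, AcceptsWith A ls → ∀ x ∈ varsOf A,
    (VLabel.openv x) ∈ ls ∧ (VLabel.closev x) ∈ ls

/-- `l` has a unique target state in `A`. -/
def UniqueTarget (A : VA Sig) (l : VLabel Sig) : Prop :=
  ∃ qt : ℕ, ∀ p q : ℕ, (p, l, q) ∈ A.δ → q = qt

/-- `A` is synchronized for the variable `x`. -/
def SyncForVA (A : VA Sig) (x : ℕ) : Prop :=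
  UniqueTarget A (VLabel.openv x) ∧ UniqueTarget A (VLabel.closev x) ∧
    ((∀ ls, AcceptsWith A ls → (VLabel.openv x) ∈ ls ∧ (VLabel.closev x) ∈ ls) ∨
     (∀ ls, AcceptsWith A ls → (VLabel.openv x) ∉ ls ∧ (VLabel.closev x) ∉ ls))

/-- `A` is the disjunctive functional VA with functional components `parts`. -/
def DisjFunctionalVAWith (A : VA Sig) (parts : List (VA Sig)) : Prop :=
  (∀ B ∈ parts, FunctionalVA B) ∧
  (parts.Pairwise fun B C => Disjoint (statesOf B) (statesOf C)) ∧
  (∀ B ∈ parts, A.q0 ∉ statesOf B) ∧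
  A.F = parts.foldr (fun B s => B.F ∪ s) (∅ : Finset ℕ) ∧
  A.δ = (parts.map (fun B => (A.q0, (VLabel.eps : VLabel Sig), B.q0))).toFinset
        ∪ parts.foldr (fun B s => B.δ ∪ s) (∅ : Finset (ℕ × VLabel Sig × ℕ))

def DisjFunctionalVA (A : VA Sig) : Prop := ∃ parts, DisjFunctionalVAWith A parts

/-! ### 3CNF formulas -/

/-- A 3CNF clause over `n` Boolean variables: a triple of literals; `(i, true)` is `xᵢ`,
`(i, false)` is `¬xᵢ`. -/
def Clause3 (n : ℕ) : Type := (Fin n × Bool) × (Fin n × Bool) × (Fin n × Bool)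

def litsOf {n : ℕ} (c : Clause3 n) : List (Fin n × Bool) := [c.1, c.2.1, c.2.2]

def clauseSat {n : ℕ} (τ : Fin n → Bool) (c : Clause3 n) : Prop :=
  ∃ l ∈ litsOf c, τ l.1 = l.2

def Sat3 {n m : ℕ} (φ : Fin m → Clause3 n) : Prop :=
  ∃ τ : Fin n → Bool, ∀ j, clauseSat τ (φ j)

end Spanners

/-!
Run `A` while recording the set `S ⊆ X` of the variables of `X` met so far, and relabel each run
so that the first operation on a variable `x ∈ X` becomes `x⊢` and the second `⊣x`. A valid run
opens and closes `x` at positions `i ≤ j`; the relabelling swaps the two operations only when `⊣x`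
is read before `x⊢`, and then both happen at the same position, so validity and the extracted
mapping are preserved. All runs reaching a state `(q, S)` have met exactly the variables in `S`,
and in the relabelled run every variable met has been opened: this is semi-functionality. Each
state and transition of `A` has at most `2 ^ |X|` copies.
-/

theorem List.count_le_one_iff_getElem? {α : Type*} [DecidableEq α] {l : List α} {a : α} :
    l.count a ≤ 1 ↔ ∀ i j : ℕ, l[i]? = some a → l[j]? = some a → i = j := by
  rw [← not_lt, Nat.lt_iff_add_one_le, ← List.duplicate_iff_two_le_count,
    List.duplicate_iff_exists_distinct_get]
  constructor
  · intro h i j hi hj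
    obtain ⟨hil, rfl⟩ := List.getElem?_eq_some_iff.mp hi
    obtain ⟨hjl, hj⟩ := List.getElem?_eq_some_iff.mp hj
    by_contra hij
    rcases lt_or_gt_of_ne hij with hlt | hlt
    · exact h ⟨⟨i, hil⟩, ⟨j, hjl⟩, hlt, rfl, hj.symm⟩
    · exact h ⟨⟨j, hjl⟩, ⟨i, hil⟩, hlt, hj.symm, rfl⟩
  · rintro h ⟨n, m, hnm, hn, hm⟩
    exact (Fin.ne_of_lt hnm) (Fin.ext (h n m (by simp [hn]) (by simp [hm])))

namespace Spanners

section Runs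

variable {Sig : Type}

theorem mem_labelVars {x : ℕ} {l : VLabel Sig} :
    x ∈ labelVars l ↔ l = .openv x ∨ l = .closev x := by
  cases l <;> simp [labelVars, eq_comm]

theorem posAt_mono (ls : List (VLabel Sig)) {a b : ℕ} (h : a ≤ b) : posAt ls a ≤ posAt ls b :=
  Nat.add_le_add_left ((List.take_sublist_take_left h).countP_le) 1

theorem posAt_congr {ls ls' : List (VLabel Sig)} (h : ls.map isLetterL = ls'.map isLetterL)
    (k : ℕ) : posAt ls k = posAt ls' k := by
  have hcount (l : List (VLabel Sig)) :
      (l.take k).countP isLetterL = ((l.map isLetterL).take k).countP id := by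
    rw [← List.map_take, List.countP_map]; rfl
  simp only [posAt, hcount, h]

def OpensClosesAt (ls : List (VLabel Sig)) (x i j : ℕ) : Prop :=
  ∀ k, (ls[k]? = some (.openv x) ↔ k = i) ∧ (ls[k]? = some (.closev x) ↔ k = j)

namespace OpensClosesAt

variable {ls : List (VLabel Sig)} {x i j : ℕ}

theorem openv_mem (h : OpensClosesAt ls x i j) : .openv x ∈ ls :=
  List.mem_of_getElem? ((h i).1.mpr rfl)

theorem closev_mem (h : OpensClosesAt ls x i j) : .closev x ∈ ls :=
  List.mem_of_getElem? ((h j).2.mpr rfl)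

theorem ne (h : OpensClosesAt ls x i j) : i ≠ j := by
  rintro rfl
  have := ((h i).1.mpr rfl).symm.trans ((h i).2.mpr rfl)
  simp at this

variable [DecidableEq Sig]

theorem runMapping_eq (h : OpensClosesAt ls x i j) :
    runMapping ls x = some (posAt ls i, posAt ls j) := by
  rw [runMapping, if_pos h.openv_mem, (h _).1.mp (List.getElem?_idxOf h.openv_mem),
    (h _).2.mp (List.getElem?_idxOf h.closev_mem)]

end OpensClosesAt

variable [DecidableEq Sig]

theorem validLabels_iff {ls : List (VLabel Sig)} :
    ValidLabels ls ↔ ∀ x, (∀ l ∈ ls, x ∉ labelVars l) ∨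
      ∃ i j, OpensClosesAt ls x i j ∧ posAt ls i ≤ posAt ls j := by
  have untouched (x : ℕ) : (∀ l ∈ ls, x ∉ labelVars l) ↔ .openv x ∉ ls ∧ .closev x ∉ ls := by
    refine ⟨fun h => ⟨fun ho => h _ ho ?_, fun hc => h _ hc ?_⟩, fun ⟨ho, hc⟩ l hl hx => ?_⟩
    · simp [labelVars]
    · simp [labelVars]
    · rcases mem_labelVars.mp hx with rfl | rfl <;> contradiction
  simp only [ValidLabels, List.count_le_one_iff_getElem?, untouched]
  refine forall_congr' fun x => ⟨fun ⟨ho, hc, hmem, hpos⟩ => ?_, ?_⟩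
  · by_cases hx : .openv x ∈ ls
    · have hx' : .closev x ∈ ls := hmem.mp hx
      have hi := List.getElem?_idxOf hx
      have hj := List.getElem?_idxOf hx'
      refine Or.inr ⟨_, _, fun k => ⟨⟨fun hk => ho k _ hk hi, ?_⟩, ⟨fun hk => hc k _ hk hj, ?_⟩⟩,
        hpos _ _ hi hj⟩
      · rintro rfl; exact hi
      · rintro rfl; exact hj
    · exact Or.inl ⟨hx, mt hmem.mpr hx⟩
  · rintro (⟨ho, hc⟩ | ⟨i, j, h, hpos⟩)
    · refine ⟨fun i _ hi => absurd (List.mem_of_getElem? hi) ho,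
        fun i _ hi => absurd (List.mem_of_getElem? hi) hc, iff_of_false ho hc,
        fun i _ hi => absurd (List.mem_of_getElem? hi) ho⟩
    · refine ⟨fun i' j' hi' hj' => ?_, fun i' j' hi' hj' => ?_, iff_of_true h.openv_mem h.closev_mem,
        fun i' j' hi' hj' => ?_⟩
      · rw [(h i').1.mp hi', (h j').1.mp hj']
      · rw [(h i').2.mp hi', (h j').2.mp hj']
      · rwa [(h i').1.mp hi', (h j').2.mp hj']

theorem runMapping_eq_none {ls : List (VLabel Sig)} {x : ℕ} (h : ∀ l ∈ ls, x ∉ labelVars l) :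
    runMapping ls x = none :=
  if_neg fun hx => h _ hx (by simp [labelVars])

end Runs

section Relabel

variable {Sig : Type}

def seen (X S : Finset ℕ) (l : VLabel Sig) : Finset ℕ := S ∪ X ∩ labelVars l

/-- With `S` the variables of `X` met so far, the first label of a variable of `X` along a run
becomes `x⊢` and the second `⊣x`. -/
def relabel (X S : Finset ℕ) : VLabel Sig → VLabel Sig
  | .openv x => if x ∈ X ∧ x ∈ S then .closev x else .openv x
  | .closev x => if x ∈ X ∧ x ∉ S then .openv x else .closev x
  | l => l

def relabelRun (X : Finset ℕ) : Finset ℕ → List (VLabel Sig) → List (VLabel Sig)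
  | _, [] => []
  | S, l :: ls => relabel X S l :: relabelRun X (seen X S l) ls

variable {X S : Finset ℕ} {x : ℕ}

theorem seen_subset (l : VLabel Sig) (h : S ⊆ X) : seen X S l ⊆ X :=
  Finset.union_subset h Finset.inter_subset_left

theorem foldl_seen_subset (ls : List (VLabel Sig)) (h : S ⊆ X) : ls.foldl (seen X) S ⊆ X := by
  induction ls generalizing S with
  | nil => exact h
  | cons l ls ih => exact ih (seen_subset l h)

theorem mem_foldl_seen (ls : List (VLabel Sig)) :
    x ∈ ls.foldl (seen X) S ↔ x ∈ S ∨ x ∈ X ∧ ∃ l ∈ ls, x ∈ labelVars l := by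
  induction ls generalizing S with
  | nil => simp
  | cons l ls ih =>
    simp only [List.foldl_cons, ih, seen, Finset.mem_union, Finset.mem_inter, List.mem_cons]
    grind

theorem labelVars_relabel (l : VLabel Sig) : labelVars (relabel X S l) = labelVars l := by
  cases l <;> grind [relabel, labelVars]

theorem isLetterL_relabel (l : VLabel Sig) : isLetterL (relabel X S l) = isLetterL l := by
  cases l <;> simp only [relabel] <;> split_ifs <;> rfl

theorem relabel_eq_openv_iff (hx : x ∈ X) {l : VLabel Sig} :
    relabel X S l = .openv x ↔ x ∈ labelVars l ∧ x ∉ S := by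
  cases l <;> grind [relabel, labelVars]

theorem relabel_eq_closev_iff (hx : x ∈ X) {l : VLabel Sig} :
    relabel X S l = .closev x ↔ x ∈ labelVars l ∧ x ∈ S := by
  cases l <;> grind [relabel, labelVars]

theorem relabel_eq_openv_iff_of_notMem (hx : x ∉ X) {l : VLabel Sig} :
    relabel X S l = .openv x ↔ l = .openv x := by
  cases l <;> grind [relabel]

theorem relabel_eq_closev_iff_of_notMem (hx : x ∉ X) {l : VLabel Sig} :
    relabel X S l = .closev x ↔ l = .closev x := by
  cases l <;> grind [relabel]

end Relabel

section RelabelRun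

variable {Sig : Type} {X S : Finset ℕ} {x : ℕ}

theorem map_relabelRun {β : Type*} {f : VLabel Sig → β} (hf : ∀ S l, f (relabel X S l) = f l)
    (S : Finset ℕ) (ls : List (VLabel Sig)) : (relabelRun X S ls).map f = ls.map f := by
  induction ls generalizing S with
  | nil => rfl
  | cons l ls ih => simp only [relabelRun, List.map_cons, hf, ih]

theorem getElem?_relabelRun (ls : List (VLabel Sig)) (k : ℕ) :
    (relabelRun X S ls)[k]? = ls[k]?.map (relabel X ((ls.take k).foldl (seen X) S)) := by
  induction ls generalizing S k with
  | nil => rfl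
  | cons l ls ih => cases k <;> simp [relabelRun, ih]

theorem posAt_relabelRun (ls : List (VLabel Sig)) (k : ℕ) :
    posAt (relabelRun X S ls) k = posAt ls k :=
  posAt_congr (map_relabelRun (fun _ _ => isLetterL_relabel _) S ls) k

theorem readWord_relabelRun (ls : List (VLabel Sig)) :
    readWord (relabelRun X S ls) = readWord ls := by
  induction ls generalizing S with
  | nil => rfl
  | cons l ls ih =>
    cases l <;> simp only [relabelRun, relabel, readWord, List.filterMap_cons] at ih ⊢ <;>
      (try split_ifs) <;> simp [ih]

theorem forall_notMem_labelVars_relabelRun {ls : List (VLabel Sig)}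
    (h : ∀ l ∈ ls, x ∉ labelVars l) : ∀ l ∈ relabelRun X S ls, x ∉ labelVars l := by
  rw [← List.forall_mem_map (P := fun s => x ∉ s), map_relabelRun (fun _ _ => labelVars_relabel _)]
  exact List.forall_mem_map.mpr h

end RelabelRun

section Transfer

variable {Sig : Type} {X S : Finset ℕ} {x i j : ℕ} {ls : List (VLabel Sig)}

theorem OpensClosesAt.mem_labelVars_iff (h : OpensClosesAt ls x i j) {m : ℕ} {l : VLabel Sig}
    (hm : ls[m]? = some l) : x ∈ labelVars l ↔ m = i ∨ m = j := by
  rw [mem_labelVars, ← (h m).1, ← (h m).2, hm, Option.some_inj, Option.some_inj]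

theorem OpensClosesAt.relabelRun_of_notMem (h : OpensClosesAt ls x i j) (hx : x ∉ X) :
    OpensClosesAt (relabelRun X S ls) x i j := by
  intro k
  rw [getElem?_relabelRun]
  cases hk : ls[k]? with
  | none => simpa [hk] using h k
  | some l =>
    simpa [hk, relabel_eq_openv_iff_of_notMem hx, relabel_eq_closev_iff_of_notMem hx] using h k

theorem OpensClosesAt.relabelRun_min_max (h : OpensClosesAt ls x i j) (hx : x ∈ X) :
    OpensClosesAt (relabelRun X ∅ ls) x (min i j) (max i j) := by
  have seen_take (k : ℕ) : x ∈ (ls.take k).foldl (seen X) ∅ ↔ i < k ∨ j < k := by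
    simp only [mem_foldl_seen, Finset.notMem_empty, false_or, hx, true_and,
      List.mem_iff_getElem?, List.getElem?_take]
    constructor
    · rintro ⟨l, ⟨m, hm⟩, hl⟩
      split_ifs at hm with hmk
      have := (h.mem_labelVars_iff hm).mp hl
      omega
    · rintro (hik | hjk)
      · exact ⟨_, ⟨i, by rw [if_pos hik]; exact (h i).1.mpr rfl⟩, by simp [labelVars]⟩
      · exact ⟨_, ⟨j, by rw [if_pos hjk]; exact (h j).2.mpr rfl⟩, by simp [labelVars]⟩
  have hij := h.ne
  intro k
  rw [getElem?_relabelRun]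
  cases hk : ls[k]? with
  | none =>
    have hi := (h i).1.mpr rfl
    have hj := (h j).2.mpr rfl
    have : k ≠ i ∧ k ≠ j := ⟨by rintro rfl; simp_all, by rintro rfl; simp_all⟩
    simp only [Option.map_none, reduceCtorEq, false_iff]
    omega
  | some l =>
    simp only [Option.map_some, Option.some_inj, relabel_eq_openv_iff hx,
      relabel_eq_closev_iff hx, h.mem_labelVars_iff hk, seen_take]
    omega

theorem OpensClosesAt.exists_relabelRun (h : OpensClosesAt ls x i j)
    (hpos : posAt ls i ≤ posAt ls j) : ∃ i' j', OpensClosesAt (relabelRun X ∅ ls) x i' j' ∧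
      posAt ls i' = posAt ls i ∧ posAt ls j' = posAt ls j := by
  by_cases hx : x ∈ X
  · refine ⟨min i j, max i j, h.relabelRun_min_max hx, ?_⟩
    rcases le_total i j with hle | hle
    · simp [hle]
    · simp [hle, le_antisymm hpos (posAt_mono ls hle)]
  · exact ⟨i, j, h.relabelRun_of_notMem hx, rfl, rfl⟩

variable [DecidableEq Sig]

theorem validLabels_relabelRun (hv : ValidLabels ls) : ValidLabels (relabelRun X ∅ ls) := by
  rw [validLabels_iff] at hv ⊢
  intro x
  rcases hv x with hx | ⟨i, j, h, hpos⟩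
  · exact Or.inl (forall_notMem_labelVars_relabelRun hx)
  · obtain ⟨i', j', h', hi, hj⟩ := h.exists_relabelRun (X := X) hpos
    exact Or.inr ⟨i', j', h', by rwa [posAt_relabelRun, posAt_relabelRun, hi, hj]⟩

theorem runMapping_relabelRun (hv : ValidLabels ls) :
    runMapping (relabelRun X ∅ ls) = runMapping ls := by
  funext x
  rcases validLabels_iff.mp hv x with hx | ⟨i, j, h, hpos⟩
  · rw [runMapping_eq_none hx, runMapping_eq_none (forall_notMem_labelVars_relabelRun hx)]
  · obtain ⟨i', j', h', hi, hj⟩ := h.exists_relabelRun (X := X) hpos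
    rw [h.runMapping_eq, h'.runMapping_eq, posAt_relabelRun, posAt_relabelRun, hi, hj]

end Transfer

section FirstMeeting

variable {Sig : Type} {X S : Finset ℕ} {x : ℕ}

theorem mem_foldl_seen_of_closev_mem (hx : x ∈ X) {ls : List (VLabel Sig)}
    (h : .closev x ∈ relabelRun X S ls) : x ∈ ls.foldl (seen X) S := by
  induction ls generalizing S with
  | nil => simp [relabelRun] at h
  | cons l ls ih =>
    rcases List.mem_cons.mp h with h | h
    · exact (mem_foldl_seen _).mpr (Or.inl ((relabel_eq_closev_iff hx).mp h.symm).2)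
    · exact ih h

theorem openv_mem_relabelRun (hx : x ∈ X) {ls : List (VLabel Sig)} (hS : x ∉ S)
    (h : x ∈ ls.foldl (seen X) S) : .openv x ∈ relabelRun X S ls := by
  induction ls generalizing S with
  | nil => exact absurd h hS
  | cons l ls ih =>
    by_cases hl : x ∈ labelVars l
    · exact List.mem_cons.mpr (Or.inl ((relabel_eq_openv_iff hx).mpr ⟨hl, hS⟩).symm)
    · exact List.mem_cons_of_mem _ (ih (by simp [seen, hS, hl]) h)

end FirstMeeting

section TrackSeen

variable {Sig : Type} [DecidableEq Sig]

/-- States are natural numbers, so the pair of a state `q` and a set `S` is stored as one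
number. -/
def encState (q : ℕ) (S : Finset ℕ) : ℕ := Nat.pair q (Encodable.encode S)

theorem encState_inj {q q' : ℕ} {S S' : Finset ℕ} :
    encState q S = encState q' S' ↔ q = q' ∧ S = S' := by
  rw [encState, encState, Nat.pair_eq_pair, Encodable.encode_inj]

def trackSeen (A : VA Sig) (X : Finset ℕ) : VA Sig where
  q0 := encState A.q0 ∅
  F := (A.F ×ˢ X.powerset).image fun p => encState p.1 p.2
  δ := (A.δ ×ˢ X.powerset).image fun p =>
    (encState p.1.1 p.2, relabel X p.2 p.1.2.1, encState p.1.2.2 (seen X p.2 p.1.2.1))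

variable {A : VA Sig} {X : Finset ℕ}

theorem mem_trackSeen_F {q : ℕ} {S : Finset ℕ} :
    encState q S ∈ (trackSeen A X).F ↔ q ∈ A.F ∧ S ⊆ X := by
  simp [trackSeen, encState_inj]

theorem mem_trackSeen_δ {t : ℕ × VLabel Sig × ℕ} :
    t ∈ (trackSeen A X).δ ↔ ∃ u ∈ A.δ, ∃ S ⊆ X,
      t = (encState u.1 S, relabel X S u.2.1, encState u.2.2 (seen X S u.2.1)) := by
  simp only [trackSeen, Finset.mem_image, Finset.mem_product, Finset.mem_powerset, Prod.exists]
  grind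

theorem VA.PathFrom.trackSeen {p q : ℕ} {ls : List (VLabel Sig)} (h : A.PathFrom p ls q)
    {S : Finset ℕ} (hS : S ⊆ X) : (trackSeen A X).PathFrom (encState p S) (relabelRun X S ls)
      (encState q (ls.foldl (seen X) S)) := by
  induction h generalizing S with
  | nil q => exact .nil _
  | @cons p q r l ls hl _ ih =>
    exact .cons (mem_trackSeen_δ.mpr ⟨(p, l, q), hl, S, hS, rfl⟩) (ih (seen_subset l hS))

theorem exists_of_pathFrom_trackSeen {p Q : ℕ} {S : Finset ℕ} {LS : List (VLabel Sig)}
    (h : (trackSeen A X).PathFrom (encState p S) LS Q) :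
    ∃ ls q, A.PathFrom p ls q ∧ LS = relabelRun X S ls ∧ Q = encState q (ls.foldl (seen X) S) := by
  generalize hP : encState p S = P at h
  induction h generalizing p S with
  | nil => exact ⟨[], p, .nil _, rfl, hP.symm⟩
  | cons ht _ ih =>
    obtain ⟨⟨p', l, q⟩, hu, S', -, he⟩ := mem_trackSeen_δ.mp ht
    simp only [Prod.mk.injEq] at he
    obtain ⟨hP', rfl, rfl⟩ := he
    obtain ⟨rfl, rfl⟩ := encState_inj.mp (hP.trans hP')
    obtain ⟨ls, q', hls, rfl, rfl⟩ := ih rfl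
    exact ⟨l :: ls, q', .cons hu hls, rfl, rfl⟩

theorem acceptsWith_trackSeen_iff {LS : List (VLabel Sig)} :
    AcceptsWith (trackSeen A X) LS ↔ ∃ ls, AcceptsWith A ls ∧ LS = relabelRun X ∅ ls := by
  constructor
  · rintro ⟨Q, hpath, hQ⟩
    obtain ⟨ls, q, hls, rfl, rfl⟩ := exists_of_pathFrom_trackSeen hpath
    exact ⟨ls, ⟨q, hls, (mem_trackSeen_F.mp hQ).1⟩, rfl⟩
  · rintro ⟨ls, ⟨q, hls, hq⟩, rfl⟩
    exact ⟨_, hls.trackSeen (Finset.empty_subset X),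
      mem_trackSeen_F.mpr ⟨hq, foldl_seen_subset ls (Finset.empty_subset X)⟩⟩

theorem statesOf_trackSeen_subset :
    statesOf (trackSeen A X) ⊆ (statesOf A ×ˢ X.powerset).image fun p => encState p.1 p.2 := by
  have enc_mem {q : ℕ} {S : Finset ℕ} (hq : q ∈ statesOf A) (hS : S ⊆ X) :
      encState q S ∈ (statesOf A ×ˢ X.powerset).image fun p => encState p.1 p.2 :=
    Finset.mem_image.mpr ⟨(q, S), Finset.mem_product.mpr ⟨hq, Finset.mem_powerset.mpr hS⟩, rfl⟩
  intro Q hQ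
  simp only [statesOf, Finset.mem_insert, Finset.mem_union, Finset.mem_image] at hQ
  rcases hQ with rfl | (hF | ⟨t, ht, rfl⟩) | ⟨t, ht, rfl⟩
  · exact enc_mem (Finset.mem_insert_self _ _) (Finset.empty_subset X)
  · obtain ⟨⟨q, S⟩, hqS, rfl⟩ := Finset.mem_image.mp hF
    obtain ⟨hq, hS⟩ := Finset.mem_product.mp hqS
    exact enc_mem (by simp [statesOf, hq]) (Finset.mem_powerset.mp hS)
  · obtain ⟨u, hu, S, hS, rfl⟩ := mem_trackSeen_δ.mp ht
    exact enc_mem (by simp only [statesOf]; grind) hS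
  · obtain ⟨u, hu, S, hS, rfl⟩ := mem_trackSeen_δ.mp ht
    exact enc_mem (by simp only [statesOf]; grind) (seen_subset _ hS)

theorem card_statesOf_trackSeen_le :
    (statesOf (trackSeen A X)).card ≤ 2 ^ X.card * (statesOf A).card :=
  calc (statesOf (trackSeen A X)).card
      ≤ (statesOf A ×ˢ X.powerset).card :=
        (Finset.card_le_card statesOf_trackSeen_subset).trans Finset.card_image_le
    _ = 2 ^ X.card * (statesOf A).card := by
        rw [Finset.card_product, Finset.card_powerset, Nat.mul_comm]

theorem card_trackSeen_δ_le : (trackSeen A X).δ.card ≤ 2 ^ X.card * A.δ.card :=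
  calc (trackSeen A X).δ.card ≤ (A.δ ×ˢ X.powerset).card := Finset.card_image_le
    _ = 2 ^ X.card * A.δ.card := by rw [Finset.card_product, Finset.card_powerset, Nat.mul_comm]

theorem sequential_trackSeen (hA : A.Sequential) : (trackSeen A X).Sequential := by
  intro LS hLS
  obtain ⟨ls, hls, rfl⟩ := acceptsWith_trackSeen_iff.mp hLS
  exact validLabels_relabelRun (hA ls hls)

theorem vaSem_trackSeen (hA : A.Sequential) (d : List Sig) :
    vaSem (trackSeen A X) d = vaSem A d := by
  ext μ
  constructor
  · rintro ⟨LS, hLS, rfl, -, rfl⟩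
    obtain ⟨ls, hls, rfl⟩ := acceptsWith_trackSeen_iff.mp hLS
    exact ⟨ls, hls, (readWord_relabelRun ls).symm, hA ls hls,
      runMapping_relabelRun (hA ls hls)⟩
  · rintro ⟨ls, hls, rfl, hv, rfl⟩
    exact ⟨relabelRun X ∅ ls, acceptsWith_trackSeen_iff.mpr ⟨ls, hls, rfl⟩,
      readWord_relabelRun ls, validLabels_relabelRun hv, (runMapping_relabelRun hv).symm⟩

theorem semiFunctionalForSet_trackSeen : SemiFunctionalForSet (trackSeen A X) X := by
  rintro x hx ⟨Q, LS₁, LS₂, ⟨h₁, -⟩, ⟨h₂, -⟩, hclose, hopen⟩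
  obtain ⟨ls₁, q₁, -, rfl, rfl⟩ := exists_of_pathFrom_trackSeen h₁
  obtain ⟨ls₂, q₂, -, rfl, hQ⟩ := exists_of_pathFrom_trackSeen h₂
  have hseen := (encState_inj.mp hQ).2
  exact hopen (openv_mem_relabelRun hx (Finset.notMem_empty x)
    (hseen ▸ mem_foldl_seen_of_closev_mem hx hclose))

end TrackSeen

variable {Sig : Type} [DecidableEq Sig]

theorem statement3_general (A : VA Sig) (X : Finset ℕ)
    (hseq : A.Sequential) :
    ∃ A' : VA Sig, A'.Sequential ∧ (∀ d : List Sig, vaSem A' d = vaSem A d) ∧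
      SemiFunctionalForSet A' X ∧
      (statesOf A').card ≤ 2 ^ X.card * (statesOf A).card ∧
      A'.δ.card ≤ 2 ^ X.card * A.δ.card :=
  ⟨trackSeen A X, sequential_trackSeen hseq, vaSem_trackSeen hseq, semiFunctionalForSet_trackSeen,
    card_statesOf_trackSeen_le, card_trackSeen_δ_le⟩

theorem statement3 (A : VA Sig) (X : Finset ℕ)
    (hseq : A.Sequential) (hX : X ⊆ varsOf A) :
    ∃ A' : VA Sig, A'.Sequential ∧ (∀ d : List Sig, vaSem A' d = vaSem A d) ∧
      SemiFunctionalForSet A' X ∧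
      (statesOf A').card ≤ 2 ^ X.card * (statesOf A).card ∧
      A'.δ.card ≤ 2 ^ X.card * A.δ.card :=
  statement3_general A X hseq

end Spanners
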